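/- (Rough integral of a controlled path) Let $\mathbf{X} = (1,X,\mathbb{X}) \in \mathscr{C}^{\alpha}([0,T],\mathbb{R}^d)$ with $\alpha \in (1/3,1/2]$ and $(Y,Y') \in \mathscr{D}^{\alpha}_X([0,T], L(\mathbb{R}^d,\mathbb{R}^m))$. Then the limit $\int_s^t Y_u \, d\mathbf{X}_u := \lim_{|\mathcal{P}|\to 0} \sum_{[u,v]\in\mathcal{P}} \big(Y_u \delta X_{u,v} + Y'_u \mathbb{X}_{u,v}\big)$ exists and satisfies $\big|\int_s^t Y_u\,d\mathbf{X}_u - Y_s \delta X_{s,t} - Y'_s \mathbb{X}_{s,t}\big| \le C(\|X\|_{\alpha}\|R^Y\|_{2\alpha} + \|\mathbb{X}\|_{2\alpha}\|Y'\|_{\alpha})|t-s|^{3\alpha}$. -/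

import Mathlib

/-!
Chen's relation turns the coboundary of the germ `Ξ_{u,v} = Y_u δX_{u,v} + Y'_u 𝕏_{u,v}` into
`Ξ_{u,w} - Ξ_{u,v} - Ξ_{v,w} = -R^Y_{u,v} δX_{v,w} - δY'_{u,v} 𝕏_{v,w}`, which is
`O(|w - u|^{3α})` with `γ = 3α > 1`. For such an almost additive germ, Young's argument applies:
a partition of `[u, v]` into `n + 1` intervals has a point whose two neighbours are at distance at
most `2|v - u|/n`, and deleting it changes the Riemann sum by at most `K (2|v - u|/n)^γ`.
Summing over `n`, every Riemann sum on `[u, v]` is within `2^γ ζ(γ) K |v - u|^γ` of `Ξ_{u,v}`.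
Used on each interval of a partition of mesh `δ`, this shows that refining it moves the Riemann
sum by `O(δ^{γ-1})`; comparing two partitions through a common refinement, the Riemann sums are
Cauchy as the mesh tends to zero, and both bounds pass to the limit.
-/

open Finset Filter Topology

structure IsPartition (τ : ℕ → ℝ) (N : ℕ) (s t : ℝ) : Prop where
  zero : τ 0 = s
  last : τ N = t
  lt_succ : ∀ i < N, τ i < τ (i + 1)

namespace IsPartition

variable {τ : ℕ → ℝ} {N : ℕ} {s t : ℝ}

theorem strictMonoOn (hτ : IsPartition τ N s t) : StrictMonoOn τ (Set.Iic N) :=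
  strictMonoOn_Iic_of_lt_succ fun i hi => hτ.lt_succ i hi

theorem mem_Icc (hτ : IsPartition τ N s t) {i : ℕ} (hi : i ≤ N) : τ i ∈ Set.Icc s t := by
  rw [← hτ.zero, ← hτ.last]
  exact ⟨hτ.strictMonoOn.monotoneOn (Nat.zero_le N) hi (Nat.zero_le i),
    hτ.strictMonoOn.monotoneOn hi (Set.mem_Iic.2 le_rfl) hi⟩

theorem lt (hτ : IsPartition τ N s t) (hN : 0 < N) : s < t := by
  rw [← hτ.zero, ← hτ.last]
  exact hτ.strictMonoOn (Nat.zero_le N) (Set.mem_Iic.2 le_rfl) hN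

theorem shift (hτ : IsPartition τ N s t) {a b : ℕ} (hab : a ≤ b) (hb : b ≤ N) :
    IsPartition (fun j => τ (a + j)) (b - a) (τ a) (τ b) where
  zero := rfl
  last := by rw [Nat.add_sub_cancel' hab]
  lt_succ i hi := hτ.lt_succ (a + i) (by omega)

end IsPartition

def erasePoint (τ : ℕ → ℝ) (q j : ℕ) : ℝ := if j < q then τ j else τ (j + 1)

theorem erasePoint_of_lt {τ : ℕ → ℝ} {q j : ℕ} (h : j < q) : erasePoint τ q j = τ j := if_pos h

theorem erasePoint_of_le {τ : ℕ → ℝ} {q j : ℕ} (h : q ≤ j) : erasePoint τ q j = τ (j + 1) :=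
  if_neg h.not_gt

theorem IsPartition.erasePoint {τ : ℕ → ℝ} {N p : ℕ} {u v : ℝ} (hτ : IsPartition τ (N + 2) u v)
    (hp : p ≤ N) : IsPartition (erasePoint τ (p + 1)) (N + 1) u v := by
  refine ⟨by rw [erasePoint_of_lt p.succ_pos, hτ.zero],
    by rw [erasePoint_of_le (by omega), hτ.last], fun i hi => ?_⟩
  rcases lt_trichotomy i p with hip | rfl | hpi
  · rw [erasePoint_of_lt (by omega), erasePoint_of_lt (by omega)]
    exact hτ.lt_succ i (by omega)
  · rw [erasePoint_of_lt (by omega), erasePoint_of_le le_rfl]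
    exact (hτ.lt_succ i (by omega)).trans (hτ.lt_succ (i + 1) (by omega))
  · rw [erasePoint_of_le (by omega), erasePoint_of_le (by omega)]
    exact hτ.lt_succ (i + 1) (by omega)

theorem IsPartition.exists_gap_le {τ : ℕ → ℝ} {N : ℕ} {u v : ℝ} (hτ : IsPartition τ (N + 2) u v) :
    ∃ p ≤ N, τ (p + 2) - τ p ≤ 2 * (v - u) / (N + 1) := by
  have hsum : ∑ p ∈ range (N + 1), (τ (p + 2) - τ p) = (τ (N + 2) - τ 1) + (τ (N + 1) - τ 0) := by
    rw [← sum_range_sub (fun i => τ (i + 1)), ← sum_range_sub τ, ← sum_add_distrib]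
    exact sum_congr rfl fun p _ => by ring
  have h1 := (hτ.mem_Icc (i := 1) (by omega)).1
  have h2 := (hτ.mem_Icc (i := N + 1) (by omega)).2
  obtain ⟨p, hp, hgap⟩ := exists_le_of_sum_le (s := range (N + 1)) nonempty_range_add_one
    (f := fun p => τ (p + 2) - τ p) (g := fun _ => 2 * (v - u) / (N + 1)) (by
      rw [hsum, sum_const, card_range, nsmul_eq_mul, hτ.zero, hτ.last]
      push_cast
      rw [mul_div_cancel₀ _ (by positivity)]
      linarith)
  exact ⟨p, Nat.lt_succ_iff.1 (mem_range.1 hp), hgap⟩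

variable {E : Type*} [NormedAddCommGroup E]

def riemannSum (Ξ : ℝ → ℝ → E) (τ : ℕ → ℝ) (N : ℕ) : E := ∑ i ∈ range N, Ξ (τ i) (τ (i + 1))

theorem riemannSum_erasePoint (Ξ : ℝ → ℝ → E) (τ : ℕ → ℝ) {N p : ℕ} (hp : p ≤ N) :
    riemannSum Ξ τ (N + 2) = riemannSum Ξ (erasePoint τ (p + 1)) (N + 1)
      - (Ξ (τ p) (τ (p + 2)) - Ξ (τ p) (τ (p + 1)) - Ξ (τ (p + 1)) (τ (p + 2))) := by
  induction N, hp using Nat.le_induction with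
  | base =>
    have hlow : ∀ i ∈ range p, Ξ (erasePoint τ (p + 1) i) (erasePoint τ (p + 1) (i + 1))
        = Ξ (τ i) (τ (i + 1)) := fun i hi => by
      rw [mem_range] at hi
      rw [erasePoint_of_lt (by omega), erasePoint_of_lt (by omega)]
    simp only [riemannSum, sum_range_succ, sum_congr rfl hlow]
    rw [erasePoint_of_lt p.lt_succ_self, erasePoint_of_le le_rfl]
    abel
  | succ N hpN ih =>
    simp only [riemannSum] at ih ⊢
    rw [sum_range_succ, ih, sum_range_succ _ (N + 1), erasePoint_of_le (by omega),
      erasePoint_of_le (by omega)]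
    abel

def AlmostAdditiveOn (Ξ : ℝ → ℝ → E) (K γ s t : ℝ) : Prop :=
  ∀ u v w, s ≤ u → u ≤ v → v ≤ w → w ≤ t → ‖Ξ u w - Ξ u v - Ξ v w‖ ≤ K * (w - u) ^ γ

theorem AlmostAdditiveOn.mono {Ξ : ℝ → ℝ → E} {K γ s t s' t' : ℝ}
    (hΞ : AlmostAdditiveOn Ξ K γ s t) (hs : s ≤ s') (ht : t' ≤ t) :
    AlmostAdditiveOn Ξ K γ s' t' :=
  fun u v w hu huv hvw hw => hΞ u v w (hs.trans hu) huv hvw (hw.trans ht)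

/-- `2 ^ γ ζ(γ)`; the `n = 0` term of the series is `1 / 0 = 0`. -/
noncomputable def sewingConst (γ : ℝ) : ℝ := 2 ^ γ * ∑' n : ℕ, 1 / (n : ℝ) ^ γ

theorem one_le_tsum_one_div_rpow {γ : ℝ} (hγ : 1 < γ) : 1 ≤ ∑' n : ℕ, 1 / (n : ℝ) ^ γ := by
  simpa using (Real.summable_one_div_nat_rpow.mpr hγ).le_tsum 1 (fun n _ => by positivity)

theorem sewingConst_pos {γ : ℝ} (hγ : 1 < γ) : 0 < sewingConst γ :=
  mul_pos (by positivity) (one_pos.trans_le (one_le_tsum_one_div_rpow hγ))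

theorem sum_Icc_rpow_le_sewingConst {γ c : ℝ} (hγ : 1 < γ) (hc : 0 ≤ c) (N : ℕ) :
    ∑ n ∈ Icc 1 N, (2 * c / n) ^ γ ≤ sewingConst γ * c ^ γ := by
  have hterm : ∀ n : ℕ, (2 * c / n) ^ γ = 2 ^ γ * c ^ γ * (1 / (n : ℝ) ^ γ) := fun n => by
    rw [Real.div_rpow (by positivity) n.cast_nonneg, Real.mul_rpow zero_le_two hc]
    ring
  simp only [hterm, ← mul_sum, sewingConst]
  rw [mul_right_comm]
  gcongr
  exact (Real.summable_one_div_nat_rpow.mpr hγ).sum_le_tsum _ (fun n _ => by positivity)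

section Young

variable {Ξ : ℝ → ℝ → E} {K γ s t u v : ℝ}

theorem norm_riemannSum_sub_le_sum (hK : 0 ≤ K) (hγ : 0 ≤ γ) (hΞ : AlmostAdditiveOn Ξ K γ s t)
    (hsu : s ≤ u) (hvt : v ≤ t) {N : ℕ} {τ : ℕ → ℝ} (hτ : IsPartition τ (N + 1) u v) :
    ‖riemannSum Ξ τ (N + 1) - Ξ u v‖ ≤ K * ∑ n ∈ Icc 1 N, (2 * (v - u) / n) ^ γ := by
  induction N generalizing τ with
  | zero => simp [riemannSum, hτ.zero, hτ.last]
  | succ N ih =>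
    obtain ⟨p, hpN, hgap⟩ := hτ.exists_gap_le
    have hrest := ih (hτ.erasePoint hpN)
    have hp := hτ.mem_Icc (i := p) (by omega)
    have hp2 := hτ.mem_Icc (i := p + 2) (by omega)
    have hdefect : ‖Ξ (τ p) (τ (p + 2)) - Ξ (τ p) (τ (p + 1)) - Ξ (τ (p + 1)) (τ (p + 2))‖
        ≤ K * (2 * (v - u) / (N + 1 : ℕ)) ^ γ := by
      refine (hΞ _ _ _ (hsu.trans hp.1) (hτ.lt_succ p (by omega)).le
        (hτ.lt_succ (p + 1) (by omega)).le (hp2.2.trans hvt)).trans ?_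
      gcongr
      · linarith [hτ.lt_succ p (by omega), hτ.lt_succ (p + 1) (by omega)]
      · push_cast; exact hgap
    rw [riemannSum_erasePoint Ξ τ hpN, sub_right_comm, sum_Icc_succ_top (by omega), mul_add]
    exact (norm_sub_le _ _).trans (add_le_add hrest hdefect)

theorem norm_riemannSum_sub_le (hK : 0 ≤ K) (hγ : 1 < γ) (hΞ : AlmostAdditiveOn Ξ K γ s t)
    (hsu : s ≤ u) (hvt : v ≤ t) {N : ℕ} {τ : ℕ → ℝ} (hτ : IsPartition τ N u v) (hN : 0 < N) :
    ‖riemannSum Ξ τ N - Ξ u v‖ ≤ sewingConst γ * K * (v - u) ^ γ := by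
  obtain ⟨N, rfl⟩ := Nat.exists_eq_add_of_lt hN
  rw [zero_add] at hτ ⊢
  have huv : u ≤ v := (hτ.lt N.succ_pos).le
  calc _ ≤ K * ∑ n ∈ Icc 1 N, (2 * (v - u) / n) ^ γ :=
        norm_riemannSum_sub_le_sum hK (by linarith) hΞ hsu hvt hτ
    _ ≤ K * (sewingConst γ * (v - u) ^ γ) := by
        gcongr; exact sum_Icc_rpow_le_sewingConst hγ (sub_nonneg.2 huv) N
    _ = _ := by ring

end Young

theorem sum_range_sum_Ico_eq {M : Type*} [AddCommMonoid M] (f : ℕ → M) {a : ℕ → ℕ} {N : ℕ}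
    (ha : MonotoneOn a (Set.Iic N)) :
    ∑ i ∈ range N, ∑ j ∈ Ico (a i) (a (i + 1)), f j = ∑ j ∈ Ico (a 0) (a N), f j := by
  induction N with
  | zero => simp
  | succ N ih =>
    rw [sum_range_succ, ih (ha.mono (Set.Iic_subset_Iic.2 N.le_succ)), sum_Ico_consecutive]
    · exact ha (Nat.zero_le _) (by simp) (Nat.zero_le N)
    · exact ha (by simp) (Set.mem_Iic.2 le_rfl) N.le_succ

theorem rpow_le_rpow_sub_one_mul {x δ γ : ℝ} (hx : 0 ≤ x) (hxδ : x ≤ δ) (hγ : 1 ≤ γ) :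
    x ^ γ ≤ δ ^ (γ - 1) * x := by
  calc x ^ γ = x ^ (γ - 1) * x := by
        rw [← Real.rpow_add_one' hx (by linarith), sub_add_cancel]
    _ ≤ δ ^ (γ - 1) * x := by gcongr

section Refinement

variable {Ξ : ℝ → ℝ → E} {K γ s t δ : ℝ} {τ σ : ℕ → ℝ} {N M : ℕ}

theorem norm_riemannSum_sub_le_of_refines (hK : 0 ≤ K) (hγ : 1 < γ)
    (hΞ : AlmostAdditiveOn Ξ K γ s t) (hτ : IsPartition τ N s t) (hσ : IsPartition σ M s t)
    (hτσ : ∀ i ≤ N, ∃ j ≤ M, σ j = τ i) (hmesh : ∀ i < N, τ (i + 1) - τ i ≤ δ) :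
    ‖riemannSum Ξ σ M - riemannSum Ξ τ N‖ ≤ sewingConst γ * K * δ ^ (γ - 1) * (t - s) := by
  choose! a haM hσa using hτσ
  have ha : StrictMonoOn a (Set.Iic N) := fun i hi j hj hij =>
    (hσ.strictMonoOn.lt_iff_lt (haM i hi) (haM j hj)).1
      (by rw [hσa i hi, hσa j hj]; exact hτ.strictMonoOn hi hj hij)
  have ha0 : a 0 = 0 := hσ.strictMonoOn.injOn (haM 0 (Nat.zero_le N)) (Nat.zero_le M)
    (by rw [hσa 0 (Nat.zero_le N), hτ.zero, hσ.zero])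
  have haN : a N = M := hσ.strictMonoOn.injOn (haM N le_rfl) (Set.mem_Iic.2 le_rfl)
    (by rw [hσa N le_rfl, hτ.last, hσ.last])
  have hblocks : riemannSum Ξ σ M
      = ∑ i ∈ range N, riemannSum Ξ (fun j => σ (a i + j)) (a (i + 1) - a i) := by
    have hshift : ∀ i, riemannSum Ξ (fun j => σ (a i + j)) (a (i + 1) - a i)
        = ∑ j ∈ Ico (a i) (a (i + 1)), Ξ (σ j) (σ (j + 1)) := fun i => by
      rw [riemannSum, sum_Ico_eq_sum_range]; rfl
    rw [sum_congr rfl fun i _ => hshift i, sum_range_sum_Ico_eq _ ha.monotoneOn, ha0, haN,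
      ← range_eq_Ico, riemannSum]
  have hblock : ∀ i ∈ range N, ‖riemannSum Ξ (fun j => σ (a i + j)) (a (i + 1) - a i)
      - Ξ (τ i) (τ (i + 1))‖ ≤ sewingConst γ * K * δ ^ (γ - 1) * (τ (i + 1) - τ i) := by
    intro i hi
    rw [mem_range] at hi
    have hlt : a i < a (i + 1) := ha (Set.mem_Iic.2 hi.le) (Set.mem_Iic.2 hi) i.lt_succ_self
    have hpart := hσ.shift hlt.le (haM (i + 1) hi)
    rw [hσa i hi.le, hσa (i + 1) hi] at hpart
    calc _ ≤ sewingConst γ * K * (τ (i + 1) - τ i) ^ γ :=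
          norm_riemannSum_sub_le hK hγ hΞ (hτ.mem_Icc hi.le).1 (hτ.mem_Icc hi).2 hpart
            (Nat.sub_pos_of_lt hlt)
      _ ≤ sewingConst γ * K * (δ ^ (γ - 1) * (τ (i + 1) - τ i)) := by
          have := sewingConst_pos hγ
          gcongr
          exact rpow_le_rpow_sub_one_mul (sub_nonneg.2 (hτ.lt_succ i hi).le) (hmesh i hi) hγ.le
      _ = _ := by ring
  calc _ = ‖∑ i ∈ range N, (riemannSum Ξ (fun j => σ (a i + j)) (a (i + 1) - a i)
        - Ξ (τ i) (τ (i + 1)))‖ := by rw [hblocks, riemannSum, sum_sub_distrib]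
    _ ≤ ∑ i ∈ range N, sewingConst γ * K * δ ^ (γ - 1) * (τ (i + 1) - τ i) :=
        (norm_sum_le _ _).trans (sum_le_sum hblock)
    _ = _ := by rw [← mul_sum, sum_range_sub, hτ.last, hτ.zero]

end Refinement

theorem exists_isPartition_of_finset {s t : ℝ} (G : Finset ℝ) (hG : ∀ x ∈ G, x ∈ Set.Icc s t)
    (hs : s ∈ G) (ht : t ∈ G) :
    ∃ ρ : ℕ → ℝ, ∃ L, IsPartition ρ L s t ∧ ∀ x ∈ G, ∃ j ≤ L, ρ j = x := by
  classical
  have hcard : 0 < G.card := card_pos.2 ⟨s, hs⟩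
  set f := G.orderEmbOfFin rfl
  refine ⟨fun j => if h : j < G.card then f ⟨j, h⟩ else t, G.card - 1, ⟨?_, ?_, ?_⟩, ?_⟩
  · rw [dif_pos hcard, orderEmbOfFin_zero rfl hcard]
    exact le_antisymm (min'_le _ _ hs) ((hG _ (min'_mem _ _)).1)
  · rw [dif_pos (by omega), orderEmbOfFin_last rfl hcard]
    exact le_antisymm ((hG _ (max'_mem _ _)).2) (le_max' _ _ ht)
  · intro i hi
    rw [dif_pos (by omega), dif_pos (by omega)]
    exact f.strictMono (Fin.mk_lt_mk.2 i.lt_succ_self)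
  · intro x hx
    obtain ⟨⟨j, hj⟩, rfl⟩ : x ∈ Set.range f := by rw [range_orderEmbOfFin]; exact hx
    exact ⟨j, by omega, dif_pos hj⟩

theorem IsPartition.exists_common_refinement {τ σ : ℕ → ℝ} {N M : ℕ} {s t : ℝ}
    (hτ : IsPartition τ N s t) (hσ : IsPartition σ M s t) :
    ∃ ρ : ℕ → ℝ, ∃ L, IsPartition ρ L s t ∧
      (∀ i ≤ N, ∃ j ≤ L, ρ j = τ i) ∧ ∀ i ≤ M, ∃ j ≤ L, ρ j = σ i := by
  classical
  obtain ⟨ρ, L, hρ, hmem⟩ := exists_isPartition_of_finset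
    ((range (N + 1)).image τ ∪ (range (M + 1)).image σ)
    (by
      simp only [mem_union, mem_image, mem_range]
      rintro x (⟨i, hi, rfl⟩ | ⟨i, hi, rfl⟩)
      exacts [hτ.mem_Icc (by omega), hσ.mem_Icc (by omega)])
    (mem_union_left _ (mem_image.2 ⟨0, by simp, hτ.zero⟩))
    (mem_union_left _ (mem_image.2 ⟨N, by simp, hτ.last⟩))
  exact ⟨ρ, L, hρ,
    fun i hi => hmem _ (mem_union_left _ (mem_image_of_mem τ (mem_range.2 (by omega)))),
    fun i hi => hmem _ (mem_union_right _ (mem_image_of_mem σ (mem_range.2 (by omega))))⟩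

section Sewing

variable {Ξ : ℝ → ℝ → E} {K γ s t : ℝ}

theorem norm_riemannSum_sub_riemannSum_le (hK : 0 ≤ K) (hγ : 1 < γ)
    (hΞ : AlmostAdditiveOn Ξ K γ s t) {τ σ : ℕ → ℝ} {N M : ℕ} {δ₁ δ₂ : ℝ}
    (hτ : IsPartition τ N s t) (hσ : IsPartition σ M s t)
    (hτδ : ∀ i < N, τ (i + 1) - τ i ≤ δ₁) (hσδ : ∀ i < M, σ (i + 1) - σ i ≤ δ₂) :
    ‖riemannSum Ξ τ N - riemannSum Ξ σ M‖
      ≤ sewingConst γ * K * (δ₁ ^ (γ - 1) + δ₂ ^ (γ - 1)) * (t - s) := by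
  obtain ⟨ρ, L, hρ, hτρ, hσρ⟩ := hτ.exists_common_refinement hσ
  have h₁ := norm_riemannSum_sub_le_of_refines hK hγ hΞ hτ hρ hτρ hτδ
  have h₂ := norm_riemannSum_sub_le_of_refines hK hγ hΞ hσ hρ hσρ hσδ
  calc _ = ‖(riemannSum Ξ ρ L - riemannSum Ξ σ M) - (riemannSum Ξ ρ L - riemannSum Ξ τ N)‖ := by
        rw [sub_sub_sub_cancel_left]
    _ ≤ _ := (norm_sub_le _ _).trans (add_le_add h₂ h₁)
    _ = _ := by ring

noncomputable def uniformPartition (s t : ℝ) (n i : ℕ) : ℝ := s + i * ((t - s) / n)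

theorem uniformPartition_succ_sub (s t : ℝ) (n i : ℕ) :
    uniformPartition s t n (i + 1) - uniformPartition s t n i = (t - s) / n := by
  simp only [uniformPartition]; push_cast; ring

theorem isPartition_uniformPartition (hst : s < t) {n : ℕ} (hn : 0 < n) :
    IsPartition (uniformPartition s t n) n s t where
  zero := by simp [uniformPartition]
  last := by
    simp only [uniformPartition]
    rw [mul_div_cancel₀ _ (Nat.cast_ne_zero.2 hn.ne' : (n : ℝ) ≠ 0), add_sub_cancel]
  lt_succ i _ := by
    have := uniformPartition_succ_sub s t n i
    have : 0 < (t - s) / n := div_pos (sub_pos.2 hst) (by exact_mod_cast hn)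
    linarith

theorem tendsto_div_rpow_atTop_nhds_zero {c β : ℝ} (hβ : 0 < β) :
    Tendsto (fun n : ℕ => (c / (n + 1)) ^ β) atTop (𝓝 0) := by
  have h := (tendsto_one_div_add_atTop_nhds_zero_nat (𝕜 := ℝ)).const_mul c
  rw [mul_zero] at h
  have := ((Real.continuousAt_rpow_const 0 β (Or.inr hβ.le)).tendsto.comp h)
  simpa [Function.comp_def, Real.zero_rpow hβ.ne', div_eq_mul_inv] using this

theorem exists_sewing [CompleteSpace E] (hK : 0 ≤ K) (hγ : 1 < γ)
    (hΞ : AlmostAdditiveOn Ξ K γ s t) (hst : s ≤ t) :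
    ∃ I : E, (∀ (N : ℕ) (τ : ℕ → ℝ) (δ : ℝ), 0 < N → IsPartition τ N s t →
        (∀ i < N, τ (i + 1) - τ i ≤ δ) →
        ‖riemannSum Ξ τ N - I‖ ≤ sewingConst γ * K * δ ^ (γ - 1) * (t - s)) ∧
      ‖I - Ξ s t‖ ≤ sewingConst γ * K * (t - s) ^ γ := by
  rcases hst.eq_or_lt with rfl | hst
  · refine ⟨Ξ s s, fun N τ δ hN hτ _ => absurd (hτ.lt hN) (lt_irrefl s), ?_⟩
    simp [Real.zero_rpow (by linarith : γ ≠ 0)]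
  set h : ℕ → ℝ := fun n => (t - s) / (n + 1)
  set U : ℕ → ℕ → ℝ := fun n => uniformPartition s t (n + 1)
  have hU : ∀ n, IsPartition (U n) (n + 1) s t := fun n =>
    isPartition_uniformPartition hst n.succ_pos
  have hUmesh : ∀ n i, U n (i + 1) - U n i ≤ h n := fun n i => by
    simp only [U, h, uniformPartition_succ_sub]; push_cast; rfl
  have hh : Tendsto (fun n => h n ^ (γ - 1)) atTop (𝓝 0) :=
    tendsto_div_rpow_atTop_nhds_zero (by linarith)
  have hcauchy : CauchySeq fun n => riemannSum Ξ (U n) (n + 1) := by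
    refine cauchySeq_of_le_tendsto_0 (fun N => sewingConst γ * K * (2 * h N ^ (γ - 1)) * (t - s))
      (fun n m N hn hm => ?_) ?_
    · have hle : ∀ {n}, N ≤ n → h n ≤ h N := fun hn => by
        simp only [h]; gcongr
      rw [dist_eq_norm, two_mul]
      exact norm_riemannSum_sub_riemannSum_le hK hγ hΞ (hU n) (hU m)
        (fun i _ => (hUmesh n i).trans (hle hn)) (fun i _ => (hUmesh m i).trans (hle hm))
    · simpa using ((hh.const_mul 2).const_mul (sewingConst γ * K)).mul_const (t - s)
  obtain ⟨I, hI⟩ := cauchySeq_tendsto_of_complete hcauchy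
  refine ⟨I, fun N τ δ hN hτ hτδ => ?_, ?_⟩
  · refine le_of_tendsto_of_tendsto' (tendsto_const_nhds.sub hI).norm ?_
      (fun n => norm_riemannSum_sub_riemannSum_le hK hγ hΞ hτ (hU n) hτδ (fun i _ => hUmesh n i))
    simpa using ((hh.const_add (δ ^ (γ - 1))).const_mul (sewingConst γ * K)).mul_const (t - s)
  · exact le_of_tendsto' (hI.sub_const _).norm fun n =>
      norm_riemannSum_sub_le hK hγ hΞ le_rfl le_rfl (hU n) n.succ_pos

end Sewing

theorem abs_sum_mul_le {ι : Type*} (S : Finset ι) (a b : ι → ℝ) {B : ℝ}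
    (hb : ∀ j ∈ S, |b j| ≤ B) : |∑ j ∈ S, a j * b j| ≤ (∑ j ∈ S, |a j|) * B := by
  rw [sum_mul]
  refine (abs_sum_le_sum_abs _ _).trans (sum_le_sum fun j hj => ?_)
  rw [abs_mul]
  exact mul_le_mul_of_nonneg_left (hb j hj) (abs_nonneg _)

theorem rpow_mul_rpow_le_rpow {a b c p q r : ℝ} (ha : 0 ≤ a) (hac : a ≤ c) (hb : 0 ≤ b)
    (hbc : b ≤ c) (hp : 0 ≤ p) (hq : 0 ≤ q) (hpqr : p + q = r) : a ^ p * b ^ q ≤ c ^ r := by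
  rw [← hpqr, Real.rpow_add_of_nonneg (ha.trans hac) hp hq]
  exact mul_le_mul (Real.rpow_le_rpow ha hac hp) (Real.rpow_le_rpow hb hbc hq)
    (Real.rpow_nonneg hb q) (Real.rpow_nonneg (ha.trans hac) p)

section RoughIntegral

variable {d m : ℕ} (X : ℝ → Fin d → ℝ) (XX : ℝ → ℝ → Fin d → Fin d → ℝ)
  (Y : ℝ → Fin m → Fin d → ℝ) (Y' : ℝ → Fin m → Fin d → Fin d → ℝ)

/-- The compensated Riemann germ `Y_u δX_{u,v} + Y'_u 𝕏_{u,v}`, in coordinate `k`. -/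
def roughGerm (k : Fin m) (u v : ℝ) : ℝ :=
  (∑ j, Y u k j * (X v j - X u j)) + ∑ p, ∑ j, Y' u k p j * XX u v p j

theorem roughGerm_coboundary
    (hChen : ∀ s u t : ℝ, ∀ i j : Fin d,
      XX s t i j = XX s u i j + XX u t i j + (X u i - X s i) * (X t j - X u j))
    (k : Fin m) (u v w : ℝ) :
    roughGerm X XX Y Y' k u w - roughGerm X XX Y Y' k u v - roughGerm X XX Y Y' k v w
      = -(∑ j, (Y v k j - Y u k j - ∑ p, Y' u k p j * (X v p - X u p)) * (X w j - X v j))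
        - ∑ p, ∑ j, (Y' v k p j - Y' u k p j) * XX v w p j := by
  have hcomm : ∀ a b : Fin d → ℝ,
      ∑ j, ∑ p, Y' u k p j * a p * b j = ∑ p, ∑ j, Y' u k p j * (a p * b j) := fun a b => by
    rw [sum_comm]; simp only [mul_assoc]
  simp only [roughGerm, hChen u v w, sub_mul, mul_add, mul_sub, sum_add_distrib, sum_sub_distrib,
    sum_mul, hcomm]
  ring

theorem almostAdditiveOn_roughGerm {α T CX CXX CY' CR : ℝ} (hα : 0 < α)
    (hChen : ∀ s u t : ℝ, ∀ i j : Fin d,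
      XX s t i j = XX s u i j + XX u t i j + (X u i - X s i) * (X t j - X u j))
    (hCX : 0 ≤ CX) (hCXX : 0 ≤ CXX) (hCY' : 0 ≤ CY') (hCR : 0 ≤ CR)
    (hX : ∀ s t : ℝ, 0 ≤ s → s ≤ t → t ≤ T → ∀ i, |X t i - X s i| ≤ CX * (t - s) ^ α)
    (hXX : ∀ s t : ℝ, 0 ≤ s → s ≤ t → t ≤ T → ∀ i j, |XX s t i j| ≤ CXX * (t - s) ^ (2 * α))
    (hY' : ∀ s t : ℝ, 0 ≤ s → s ≤ t → t ≤ T → ∀ k,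
      ∑ i, ∑ j, |Y' t k i j - Y' s k i j| ≤ CY' * (t - s) ^ α)
    (hR : ∀ s t : ℝ, 0 ≤ s → s ≤ t → t ≤ T → ∀ k,
      ∑ j, |Y t k j - Y s k j - ∑ i, Y' s k i j * (X t i - X s i)| ≤ CR * (t - s) ^ (2 * α))
    (k : Fin m) :
    AlmostAdditiveOn (roughGerm X XX Y Y' k) (CX * CR + CXX * CY') (3 * α) 0 T := by
  intro u v w hu huv hvw hwT
  have hv : 0 ≤ v := hu.trans huv
  have hvT : v ≤ T := hvw.trans hwT
  have hremainder : |∑ j, (Y v k j - Y u k j - ∑ p, Y' u k p j * (X v p - X u p))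
      * (X w j - X v j)| ≤ CR * (v - u) ^ (2 * α) * (CX * (w - v) ^ α) :=
    (abs_sum_mul_le _ _ _ fun j _ => hX v w hv hvw hwT j).trans
      (mul_le_mul_of_nonneg_right (hR u v hu huv hvT k) (by positivity))
  have hsecondOrder : |∑ p, ∑ j, (Y' v k p j - Y' u k p j) * XX v w p j|
      ≤ CY' * (v - u) ^ α * (CXX * (w - v) ^ (2 * α)) :=
    calc _ ≤ ∑ p, |∑ j, (Y' v k p j - Y' u k p j) * XX v w p j| := abs_sum_le_sum_abs _ _
      _ ≤ ∑ p, (∑ j, |Y' v k p j - Y' u k p j|) * (CXX * (w - v) ^ (2 * α)) :=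
          sum_le_sum fun p _ => abs_sum_mul_le _ _ _ fun j _ => hXX v w hv hvw hwT p j
      _ ≤ _ := by
          rw [← sum_mul]
          exact mul_le_mul_of_nonneg_right (hY' u v hu huv hvT k) (by positivity)
  have hvu : 0 ≤ v - u := sub_nonneg.2 huv
  have hwv : 0 ≤ w - v := sub_nonneg.2 hvw
  have hvu_le : v - u ≤ w - u := by linarith
  have hwv_le : w - v ≤ w - u := by linarith
  have hexp₁ : (v - u) ^ (2 * α) * (w - v) ^ α ≤ (w - u) ^ (3 * α) :=
    rpow_mul_rpow_le_rpow hvu hvu_le hwv hwv_le (by positivity) hα.le (by ring)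
  have hexp₂ : (v - u) ^ α * (w - v) ^ (2 * α) ≤ (w - u) ^ (3 * α) :=
    rpow_mul_rpow_le_rpow hvu hvu_le hwv hwv_le hα.le (by positivity) (by ring)
  rw [roughGerm_coboundary X XX Y Y' hChen, Real.norm_eq_abs]
  calc _ ≤ _ := (abs_sub _ _).trans (add_le_add (abs_neg _).le le_rfl)
    _ ≤ CR * (v - u) ^ (2 * α) * (CX * (w - v) ^ α)
        + CY' * (v - u) ^ α * (CXX * (w - v) ^ (2 * α)) := add_le_add hremainder hsecondOrder
    _ = CX * CR * ((v - u) ^ (2 * α) * (w - v) ^ α)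
        + CXX * CY' * ((v - u) ^ α * (w - v) ^ (2 * α)) := by ring
    _ ≤ CX * CR * (w - u) ^ (3 * α) + CXX * CY' * (w - u) ^ (3 * α) := by gcongr
    _ = _ := by ring

end RoughIntegral

theorem exists_pos_mul_rpow_lt {A β ε : ℝ} (hβ : 0 < β) (hε : 0 < ε) :
    ∃ δ > 0, A * δ ^ β < ε := by
  have h : Tendsto (fun δ : ℝ => A * δ ^ β) (𝓝[>] 0) (𝓝 0) := by
    simpa [Real.zero_rpow hβ.ne'] using
      ((Real.continuousAt_rpow_const 0 β (Or.inr hβ.le)).tendsto.const_mul A).mono_left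
        nhdsWithin_le_nhds
  obtain ⟨δ, hδε, hδ⟩ := ((h.eventually (gt_mem_nhds hε)).and self_mem_nhdsWithin).exists
  exact ⟨δ, hδ, hδε⟩

theorem rough_integral_exists_general
    (α T : ℝ) (hα : 1 / 3 < α) :
    ∃ C : ℝ, 0 < C ∧
      ∀ (d m : ℕ) (X : ℝ → Fin d → ℝ) (XX : ℝ → ℝ → Fin d → Fin d → ℝ),
        -- Chen's relation
        (∀ s u t : ℝ, ∀ i j : Fin d,
          XX s t i j = XX s u i j + XX u t i j + (X u i - X s i) * (X t j - X u j)) →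
        ∀ (Y : ℝ → Fin m → Fin d → ℝ) (Y' : ℝ → Fin m → Fin d → Fin d → ℝ)
          (CX CXX CY' CR : ℝ), 0 ≤ CX → 0 ≤ CXX → 0 ≤ CY' → 0 ≤ CR →
        (∀ s t : ℝ, 0 ≤ s → s ≤ t → t ≤ T → ∀ i, |X t i - X s i| ≤ CX * (t - s) ^ α) →
        (∀ s t : ℝ, 0 ≤ s → s ≤ t → t ≤ T → ∀ i j,
          |XX s t i j| ≤ CXX * (t - s) ^ (2 * α)) →
        (∀ s t : ℝ, 0 ≤ s → s ≤ t → t ≤ T → ∀ k,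
          ∑ i, ∑ j, |Y' t k i j - Y' s k i j| ≤ CY' * (t - s) ^ α) →
        -- `(Y,Y')` controlled by `X`: `2α`-Hölder remainder
        (∀ s t : ℝ, 0 ≤ s → s ≤ t → t ≤ T → ∀ k,
          ∑ j, |Y t k j - Y s k j - ∑ i, Y' s k i j * (X t i - X s i)|
            ≤ CR * (t - s) ^ (2 * α)) →
        ∃ I : ℝ → ℝ → Fin m → ℝ,
          -- the compensated Riemann sums converge to `I s t`
          (∀ s t, 0 ≤ s → s ≤ t → t ≤ T → ∀ ε > 0, ∃ δ > 0,
            ∀ (N : ℕ) (τ : ℕ → ℝ), 0 < N → τ 0 = s → τ N = t →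
              (∀ i < N, τ i < τ (i + 1)) → (∀ i < N, τ (i + 1) - τ i < δ) →
              ∀ k, |(∑ i ∈ Finset.range N,
                  ((∑ j, Y (τ i) k j * (X (τ (i + 1)) j - X (τ i) j))
                    + ∑ p, ∑ j, Y' (τ i) k p j * XX (τ i) (τ (i + 1)) p j))
                  - I s t k| < ε) ∧
          -- the sewing bound
          (∀ s t, 0 ≤ s → s ≤ t → t ≤ T → ∀ k,
            |I s t k - ((∑ j, Y s k j * (X t j - X s j))
                + ∑ p, ∑ j, Y' s k p j * XX s t p j)|
              ≤ C * (CX * CR + CXX * CY') * (t - s) ^ (3 * α)) := by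
  have hγ : 1 < 3 * α := by linarith
  refine ⟨sewingConst (3 * α), sewingConst_pos hγ, ?_⟩
  intro d m X XX hChen Y Y' CX CXX CY' CR hCX hCXX hCY' hCR hX hXX hY' hR
  set K := CX * CR + CXX * CY'
  have hsewing : ∀ s t k, ∃ I : ℝ, 0 ≤ s → s ≤ t → t ≤ T →
      (∀ (N : ℕ) (τ : ℕ → ℝ) (δ : ℝ), 0 < N → IsPartition τ N s t →
        (∀ i < N, τ (i + 1) - τ i ≤ δ) →
        ‖riemannSum (roughGerm X XX Y Y' k) τ N - I‖
          ≤ sewingConst (3 * α) * K * δ ^ (3 * α - 1) * (t - s)) ∧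
      ‖I - roughGerm X XX Y Y' k s t‖ ≤ sewingConst (3 * α) * K * (t - s) ^ (3 * α) := by
    intro s t k
    by_cases hst : 0 ≤ s ∧ s ≤ t ∧ t ≤ T
    · obtain ⟨I, hI⟩ := exists_sewing (by positivity) hγ ((almostAdditiveOn_roughGerm X XX Y Y'
        (by linarith) hChen hCX hCXX hCY' hCR hX hXX hY' hR k).mono hst.1 hst.2.2) hst.2.1
      exact ⟨I, fun _ _ _ => hI⟩
    · exact ⟨0, fun hs hst' ht => absurd ⟨hs, hst', ht⟩ hst⟩
  choose I hI using hsewing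
  refine ⟨I, fun s t hs hst ht ε hε => ?_, fun s t hs hst ht k => (hI s t k hs hst ht).2⟩
  obtain ⟨δ, hδ, hδε⟩ := exists_pos_mul_rpow_lt (A := sewingConst (3 * α) * K * (t - s))
    (by linarith : 0 < 3 * α - 1) hε
  refine ⟨δ, hδ, fun N τ hN h0 hN' hlt hmesh k => ?_⟩
  refine ((hI s t k hs hst ht).1 N τ δ hN ⟨h0, hN', hlt⟩ fun i hi => (hmesh i hi).le).trans_lt ?_
  linarith

/-- Rough integral of a controlled path: for an `α`-Hölder rough
path `(X,𝕏)` with `α ∈ (1/3,1/2]` and a controlled path `(Y,Y')`, the compensated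
Riemann sums `∑ (Y_u δX_{u,v} + Y'_u 𝕏_{u,v})` converge, and the limit
`I s t = ∫_s^t Y d𝐗` satisfies
`‖I s t - Y_s δX_{s,t} - Y'_s 𝕏_{s,t}‖ ≤ C (‖X‖_α ‖R^Y‖_{2α} + ‖𝕏‖_{2α} ‖Y'‖_α) (t-s)^{3α}`. -/
theorem rough_integral_exists
    (α T : ℝ) (hα : 1 / 3 < α) (hα2 : α ≤ 1 / 2) (hT : 0 < T) :
    ∃ C : ℝ, 0 < C ∧
      ∀ (d m : ℕ) (X : ℝ → Fin d → ℝ) (XX : ℝ → ℝ → Fin d → Fin d → ℝ),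
        -- Chen's relation
        (∀ s u t : ℝ, ∀ i j : Fin d,
          XX s t i j = XX s u i j + XX u t i j + (X u i - X s i) * (X t j - X u j)) →
        ∀ (Y : ℝ → Fin m → Fin d → ℝ) (Y' : ℝ → Fin m → Fin d → Fin d → ℝ)
          (CX CXX CY' CR : ℝ), 0 ≤ CX → 0 ≤ CXX → 0 ≤ CY' → 0 ≤ CR →
        (∀ s t : ℝ, 0 ≤ s → s ≤ t → t ≤ T → ∀ i, |X t i - X s i| ≤ CX * (t - s) ^ α) →
        (∀ s t : ℝ, 0 ≤ s → s ≤ t → t ≤ T → ∀ i j,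
          |XX s t i j| ≤ CXX * (t - s) ^ (2 * α)) →
        (∀ s t : ℝ, 0 ≤ s → s ≤ t → t ≤ T → ∀ k,
          ∑ i, ∑ j, |Y' t k i j - Y' s k i j| ≤ CY' * (t - s) ^ α) →
        -- `(Y,Y')` controlled by `X`: `2α`-Hölder remainder
        (∀ s t : ℝ, 0 ≤ s → s ≤ t → t ≤ T → ∀ k,
          ∑ j, |Y t k j - Y s k j - ∑ i, Y' s k i j * (X t i - X s i)|
            ≤ CR * (t - s) ^ (2 * α)) →
        ∃ I : ℝ → ℝ → Fin m → ℝ,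
          -- the compensated Riemann sums converge to `I s t`
          (∀ s t, 0 ≤ s → s ≤ t → t ≤ T → ∀ ε > 0, ∃ δ > 0,
            ∀ (N : ℕ) (τ : ℕ → ℝ), 0 < N → τ 0 = s → τ N = t →
              (∀ i < N, τ i < τ (i + 1)) → (∀ i < N, τ (i + 1) - τ i < δ) →
              ∀ k, |(∑ i ∈ Finset.range N,
                  ((∑ j, Y (τ i) k j * (X (τ (i + 1)) j - X (τ i) j))
                    + ∑ p, ∑ j, Y' (τ i) k p j * XX (τ i) (τ (i + 1)) p j))
                  - I s t k| < ε) ∧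
          -- the sewing bound
          (∀ s t, 0 ≤ s → s ≤ t → t ≤ T → ∀ k,
            |I s t k - ((∑ j, Y s k j * (X t j - X s j))
                + ∑ p, ∑ j, Y' s k p j * XX s t p j)|
              ≤ C * (CX * CR + CXX * CY') * (t - s) ^ (3 * α)) :=
  rough_integral_exists_general α T hα
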